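/- For every ε > 0 there exists K > 0 such that for all k ∈ ℂ with |k| ≥ K and all x ∈ [0,ℓ] one has |∫₀ˣ cos(k(x−2t)) g(t) dt| ≤ ε · e^{|Im k| x}. -/

import Mathlib

open MeasureTheory intervalIntegral Real
open scoped ContDiff

/-!
Approximate `g` in `L¹(0, ℓ)` by a smooth `h`. Since `|x - 2t| ≤ x` for `0 ≤ t ≤ x`, the kernel
`cos (k (x - 2t))` is bounded by `e^{|Im k| x}` and its antiderivative `-sin (k (x - 2t)) / (2k)` by
`e^{|Im k| x} / (2|k|)`. The first bound controls the contribution of `g - h` by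
`e^{|Im k| x} ‖g - h‖₁`; integrating by parts against the second shows that the contribution of `h`
is `O(e^{|Im k| x} / |k|)`.
-/

namespace Complex

theorem norm_exp_mul_I_le (z : ℂ) : ‖exp (z * I)‖ ≤ Real.exp |z.im| := by
  rw [norm_exp, mul_I_re]
  exact Real.exp_le_exp.2 (neg_le_abs _)

theorem norm_cos_le_exp_abs_im (z : ℂ) : ‖cos z‖ ≤ Real.exp |z.im| := by
  have h := norm_exp_mul_I_le (-z)
  rw [neg_im, abs_neg] at h
  rw [cos, norm_div, Complex.norm_ofNat]
  linarith [norm_add_le (exp (z * I)) (exp (-z * I)), norm_exp_mul_I_le z]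

theorem norm_sin_le_exp_abs_im (z : ℂ) : ‖sin z‖ ≤ Real.exp |z.im| := by
  have h := norm_exp_mul_I_le (-z)
  rw [neg_im, abs_neg] at h
  rw [sin, norm_div, norm_mul, norm_I, mul_one, Complex.norm_ofNat]
  linarith [norm_sub_le (exp (-z * I)) (exp (z * I)), norm_exp_mul_I_le z]

end Complex

theorem MeasureTheory.Integrable.exists_contDiff_integral_norm_sub_le
    {E F : Type*} [NormedAddCommGroup E] [NormedSpace ℝ E] [FiniteDimensional ℝ E]
    [MeasurableSpace E] [BorelSpace E] [NormedAddCommGroup F] [NormedSpace ℝ F]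
    {μ : Measure E} [IsFiniteMeasureOnCompacts μ] {f : E → F} (hf : Integrable f μ)
    {δ : ℝ} (hδ : 0 < δ) :
    ∃ h : E → F, ContDiff ℝ ∞ h ∧ ∫ x, ‖f x - h x‖ ∂μ ≤ δ := by
  obtain ⟨h, hsupp, hsmooth, hle⟩ :=
    (memLp_one_iff_integrable.2 hf).exist_eLpNorm_sub_le ENNReal.one_ne_top le_rfl hδ
  refine ⟨h, hsmooth, ?_⟩
  have hint : Integrable (f - h) μ :=
    hf.sub (hsmooth.continuous.integrable_of_hasCompactSupport hsupp)
  calc ∫ x, ‖f x - h x‖ ∂μ = (eLpNorm (f - h) 1 μ).toReal := by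
        rw [eLpNorm_one_eq_lintegral_enorm, ← integral_norm_eq_lintegral_enorm hint.1]; rfl
    _ ≤ δ := ENNReal.toReal_le_of_le_ofReal hδ.le hle

theorem norm_integral_mul_deriv_le
    {A : Type*} [NormedRing A] [NormedAlgebra ℝ A] [CompleteSpace A]
    {u u' v v' : ℝ → A} {a b U U' V : ℝ} (hab : a ≤ b)
    (hu : ∀ t ∈ Set.Icc a b, HasDerivAt u (u' t) t) (hv : ∀ t ∈ Set.Icc a b, HasDerivAt v (v' t) t)
    (hu' : IntervalIntegrable u' volume a b) (hv' : IntervalIntegrable v' volume a b)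
    (hU : ∀ t ∈ Set.Icc a b, ‖u t‖ ≤ U) (hU' : ∀ t ∈ Set.Icc a b, ‖u' t‖ ≤ U')
    (hV : ∀ t ∈ Set.Icc a b, ‖v t‖ ≤ V) :
    ‖∫ t in a..b, u t * v' t‖ ≤ (2 * U + (b - a) * U') * V := by
  have ha : a ∈ Set.Icc a b := Set.left_mem_Icc.2 hab
  have hb : b ∈ Set.Icc a b := Set.right_mem_Icc.2 hab
  have hprod : ∀ {f w : ℝ → A} {F W : ℝ}, (∀ t ∈ Set.Icc a b, ‖f t‖ ≤ F) →
      (∀ t ∈ Set.Icc a b, ‖w t‖ ≤ W) → ∀ t ∈ Set.Icc a b, ‖f t * w t‖ ≤ F * W :=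
    fun hF hW t ht => (norm_mul_le _ _).trans <|
      mul_le_mul (hF t ht) (hW t ht) (norm_nonneg _) ((norm_nonneg _).trans (hF t ht))
  have hint : ‖∫ t in a..b, u' t * v t‖ ≤ U' * V * (b - a) := by
    rw [← abs_of_nonneg (sub_nonneg.2 hab)]
    refine norm_integral_le_of_norm_le_const fun t ht => hprod hU' hV t ?_
    rw [Set.uIoc_of_le hab] at ht
    exact Set.Ioc_subset_Icc_self ht
  rw [integral_mul_deriv_eq_deriv_mul (by rwa [Set.uIcc_of_le hab]) (by rwa [Set.uIcc_of_le hab])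
    hu' hv']
  calc ‖u b * v b - u a * v a - ∫ t in a..b, u' t * v t‖
      ≤ ‖u b * v b‖ + ‖u a * v a‖ + ‖∫ t in a..b, u' t * v t‖ :=
        (norm_sub_le _ _).trans (add_le_add_left (norm_sub_le _ _) _)
    _ ≤ U * V + U * V + U' * V * (b - a) :=
      add_le_add (add_le_add (hprod hU hV b hb) (hprod hU hV a ha)) hint
    _ = (2 * U + (b - a) * U') * V := by ring

theorem abs_im_mul_sub_two_mul_le (k : ℂ) {x t : ℝ} (ht : t ∈ Set.Icc 0 x) :
    |(k * ((x : ℂ) - 2 * t)).im| ≤ |k.im| * x := by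
  have hcast : (x : ℂ) - 2 * t = ((x - 2 * t : ℝ) : ℂ) := by push_cast; ring
  rw [hcast, Complex.im_mul_ofReal, abs_mul]
  exact mul_le_mul_of_nonneg_left (abs_le.2 ⟨by linarith [ht.2], by linarith [ht.1]⟩)
    (abs_nonneg _)

theorem hasDerivAt_neg_sin_mul_sub_two_mul_div {k : ℂ} (hk : k ≠ 0) (x t : ℝ) :
    HasDerivAt (fun s : ℝ => -Complex.sin (k * ((x : ℂ) - 2 * s)) / (2 * k))
      (Complex.cos (k * ((x : ℂ) - 2 * t))) t := by
  have h := ((((hasDerivAt_id (t : ℂ)).const_mul 2).const_sub (x : ℂ)).const_mul k).csin.neg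
    |>.div_const (2 * k) |>.comp_ofReal
  convert h using 1
  · simp only [Pi.neg_apply, id, neg_div]
  · field_simp
    simp

theorem norm_cos_mul_sub_two_mul_le (k : ℂ) {x t : ℝ} (ht : t ∈ Set.Icc 0 x) :
    ‖Complex.cos (k * ((x : ℂ) - 2 * t))‖ ≤ Real.exp (|k.im| * x) :=
  (Complex.norm_cos_le_exp_abs_im _).trans (Real.exp_le_exp.2 (abs_im_mul_sub_two_mul_le k ht))

theorem norm_sin_mul_sub_two_mul_le (k : ℂ) {x t : ℝ} (ht : t ∈ Set.Icc 0 x) :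
    ‖Complex.sin (k * ((x : ℂ) - 2 * t))‖ ≤ Real.exp (|k.im| * x) :=
  (Complex.norm_sin_le_exp_abs_im _).trans (Real.exp_le_exp.2 (abs_im_mul_sub_two_mul_le k ht))

theorem IntervalIntegrable.ofReal {f : ℝ → ℝ} {a b : ℝ} {μ : Measure ℝ}
    (hf : IntervalIntegrable f μ a b) : IntervalIntegrable (fun t => (f t : ℂ)) μ a b :=
  ⟨hf.1.ofReal, hf.2.ofReal⟩

theorem norm_integral_cos_mul_sub_le (k : ℂ) {x : ℝ} (hx : 0 ≤ x) {g h : ℝ → ℝ}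
    (hg : IntervalIntegrable g volume 0 x) (hh : IntervalIntegrable h volume 0 x) :
    ‖(∫ t in (0 : ℝ)..x, Complex.cos (k * ((x : ℂ) - 2 * t)) * (g t : ℂ))
        - ∫ t in (0 : ℝ)..x, Complex.cos (k * ((x : ℂ) - 2 * t)) * (h t : ℂ)‖
      ≤ Real.exp (|k.im| * x) * ∫ t in (0 : ℝ)..x, |g t - h t| := by
  have hcos : ContinuousOn (fun t : ℝ => Complex.cos (k * ((x : ℂ) - 2 * t))) (Set.uIcc 0 x) :=
    by fun_prop
  rw [← intervalIntegral.integral_sub (hg.ofReal.continuousOn_mul hcos)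
    (hh.ofReal.continuousOn_mul hcos), ← intervalIntegral.integral_const_mul]
  refine norm_integral_le_of_norm_le hx (ae_of_all _ fun t ht => ?_)
    ((hg.sub hh).abs.const_mul _)
  rw [← mul_sub, ← Complex.ofReal_sub, norm_mul, Complex.norm_real, Real.norm_eq_abs]
  exact mul_le_mul_of_nonneg_right
    (norm_cos_mul_sub_two_mul_le k (Set.Ioc_subset_Icc_self ht)) (abs_nonneg _)

theorem ContDiff.exists_norm_integral_cos_mul_le {u : ℝ → ℝ} (hu : ContDiff ℝ 1 u) (ℓ : ℝ) :
    ∃ C, ∀ k : ℂ, k ≠ 0 → ∀ x ∈ Set.Icc (0 : ℝ) ℓ,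
      ‖∫ t in (0 : ℝ)..x, Complex.cos (k * ((x : ℂ) - 2 * t)) * (u t : ℂ)‖
        ≤ C * Real.exp (|k.im| * x) / ‖k‖ := by
  obtain ⟨M, hM⟩ := isCompact_Icc.exists_bound_of_continuousOn hu.continuous.continuousOn
  have hderiv := hu.continuous_deriv le_rfl
  obtain ⟨M', hM'⟩ := isCompact_Icc.exists_bound_of_continuousOn hderiv.continuousOn
  refine ⟨(2 * M + ℓ * M') / 2, fun k hk x hx => ?_⟩
  have hsub : Set.Icc 0 x ⊆ Set.Icc 0 ℓ := Set.Icc_subset_Icc_right hx.2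
  have hM'0 : 0 ≤ M' := (norm_nonneg _).trans (hM' x hx)
  have hparts := norm_integral_mul_deriv_le hx.1 (u := fun t => (u t : ℂ))
    (u' := fun t => ((deriv u t : ℝ) : ℂ)) (U := M) (U' := M')
    (v := fun s : ℝ => -Complex.sin (k * ((x : ℂ) - 2 * s)) / (2 * k))
    (v' := fun t : ℝ => Complex.cos (k * ((x : ℂ) - 2 * t)))
    (fun t _ => ((hu.differentiable one_ne_zero t).hasDerivAt).ofReal_comp)
    (fun t _ => hasDerivAt_neg_sin_mul_sub_two_mul_div hk x t)
    ((Complex.continuous_ofReal.comp hderiv).intervalIntegrable _ _)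
    ((by fun_prop : Continuous _).intervalIntegrable _ _)
    (fun t ht => by simpa using hM t (hsub ht)) (fun t ht => by simpa using hM' t (hsub ht))
    (fun t ht => by
      rw [norm_div, norm_neg, norm_mul, Complex.norm_ofNat]
      exact div_le_div_of_nonneg_right (norm_sin_mul_sub_two_mul_le k ht) (by positivity))
  simp_rw [mul_comm (Complex.cos _)]
  calc _ ≤ _ := hparts
    _ ≤ (2 * M + ℓ * M') * (Real.exp (|k.im| * x) / (2 * ‖k‖)) := by
      gcongr
      linarith [hx.2]
    _ = (2 * M + ℓ * M') / 2 * Real.exp (|k.im| * x) / ‖k‖ := by ring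

theorem gelfand_levitan_oscillatory_cos_integral_general
    (ℓ : ℝ) (g : ℝ → ℝ)
    (hg : IntervalIntegrable g volume 0 ℓ) :
    ∀ ε > 0, ∃ K > 0, ∀ k : ℂ, K ≤ ‖k‖ → ∀ x ∈ Set.Icc (0 : ℝ) ℓ,
      ‖∫ t in (0 : ℝ)..x, Complex.cos (k * ((x : ℂ) - 2 * t)) * (g t : ℂ)‖
        ≤ ε * Real.exp (|k.im| * x) := by
  intro ε hε
  obtain ⟨h, hh, hgh⟩ := Integrable.exists_contDiff_integral_norm_sub_le hg.1 (half_pos hε)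
  obtain ⟨C, hC⟩ := (hh.of_le (mod_cast le_top)).exists_norm_integral_cos_mul_le ℓ
  refine ⟨max (2 * C / ε) 1, by positivity, fun k hk x hx => ?_⟩
  have hk0 : 0 < ‖k‖ := lt_of_lt_of_le (by positivity) hk
  have hgx : IntervalIntegrable g volume 0 x :=
    hg.mono_set (Set.uIcc_subset_uIcc_left (Set.mem_uIcc_of_le hx.1 hx.2))
  have hL1 : ∫ t in (0 : ℝ)..x, |g t - h t| ≤ ε / 2 := by
    rw [integral_of_le hx.1]
    refine le_trans (setIntegral_mono_set ?_ (ae_of_all _ fun t => abs_nonneg _)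
      (Set.Ioc_subset_Ioc_right hx.2).eventuallyLE) hgh
    exact (hg.1.sub hh.continuous.integrableOn_Ioc).abs
  have hCk : C / ‖k‖ ≤ ε / 2 := by
    have := (div_le_iff₀ hε).1 ((le_max_left _ _).trans hk)
    rw [div_le_iff₀ hk0]
    linarith
  have hsmooth : ‖∫ t in (0 : ℝ)..x, Complex.cos (k * ((x : ℂ) - 2 * t)) * (h t : ℂ)‖
      ≤ ε / 2 * Real.exp (|k.im| * x) :=
    (hC k (norm_pos_iff.1 hk0) x hx).trans (by rw [mul_div_right_comm]; gcongr)
  have hrough := norm_integral_cos_mul_sub_le k hx.1 hgx (hh.continuous.intervalIntegrable 0 x)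
  calc _ ≤ _ := (norm_le_norm_add_norm_sub' _ _).trans (add_le_add hsmooth hrough)
    _ ≤ ε / 2 * Real.exp (|k.im| * x) + Real.exp (|k.im| * x) * (ε / 2) := by gcongr
    _ = ε * Real.exp (|k.im| * x) := by ring

/-- Riemann–Lebesgue type estimate: for `g ∈ L¹((0,ℓ))`, the oscillatory
integral `∫₀ˣ cos(k(x−2t)) g(t) dt` is `o(e^{|Im k| x})` as `|k| → ∞`, uniformly in
`x ∈ [0, ℓ]`. -/
theorem gelfand_levitan_oscillatory_cos_integral
    (ℓ : ℝ) (hℓ : 0 < ℓ) (g : ℝ → ℝ)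
    (hg : IntervalIntegrable g volume 0 ℓ) :
    ∀ ε > 0, ∃ K > 0, ∀ k : ℂ, K ≤ ‖k‖ → ∀ x ∈ Set.Icc (0 : ℝ) ℓ,
      ‖∫ t in (0 : ℝ)..x, Complex.cos (k * ((x : ℂ) - 2 * t)) * (g t : ℂ)‖
        ≤ ε * Real.exp (|k.im| * x) :=
  gelfand_levitan_oscillatory_cos_integral_general ℓ g hg
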